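/- arXiv:2106.06708 — 3 statements merged into one kernel-verified Lean document; each statement's English description precedes it below -/
import Mathlib

section
/- For q ∈ (0,1), the series ∑_{j=0}^{∞} (−1)ʲ binom(q,j) converges to 0. -/
/-!
By Pascal's rule the partial sums telescope:
`∑_{j ≤ n} (-1)^j binom(q, j) = (-1)^n binom(q - 1, n) = ∏_{i < n} (1 - q / (i + 1))`.
For `0 < q < 1` these products decrease, so every term after the first is `≤ 0` and the series
converges absolutely; and they are bounded by `exp (-q H_n) → 0`, `H_n` the harmonic numbers.
-/

/-- Generalized binomial coefficient binom(q, j) = ∏_{i=0}^{j−1} (q − i) / j!. -/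
noncomputable def genBinom (q : ℝ) (j : ℕ) : ℝ :=
  (∏ i ∈ Finset.range j, (q - i)) / (Nat.factorial j)

open Finset Filter Topology

theorem genBinom_zero_right (q : ℝ) : genBinom q 0 = 1 := by
  simp [genBinom]

theorem genBinom_succ_right (q : ℝ) (n : ℕ) :
    genBinom q (n + 1) = genBinom q n * (q - n) / (n + 1) := by
  simp only [genBinom, prod_range_succ, Nat.factorial_succ]
  push_cast
  field_simp

theorem genBinom_succ_succ (q : ℝ) (n : ℕ) :
    genBinom (q + 1) (n + 1) = genBinom q n + genBinom q (n + 1) := by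
  have hshift : genBinom (q + 1) (n + 1) = (q + 1) * genBinom q n / (n + 1) := by
    simp only [genBinom, prod_range_succ', Nat.factorial_succ, Nat.cast_succ,
      add_sub_add_right_eq_sub, Nat.cast_zero, sub_zero]
    push_cast
    field_simp
  rw [hshift, genBinom_succ_right]
  field_simp
  ring

theorem sum_range_succ_neg_one_pow_mul_genBinom (q : ℝ) (n : ℕ) :
    ∑ j ∈ range (n + 1), (-1) ^ j * genBinom (q + 1) j = (-1) ^ n * genBinom q n := by
  induction n with
  | zero => simp [genBinom_zero_right]
  | succ n ih =>
    rw [sum_range_succ, ih, genBinom_succ_succ]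
    ring

theorem neg_one_pow_mul_genBinom (q : ℝ) (n : ℕ) :
    (-1) ^ n * genBinom q n = ∏ i ∈ range n, (i - q) / (i + 1) := by
  induction n with
  | zero => simp [genBinom_zero_right]
  | succ n ih =>
    rw [prod_range_succ, ← ih, genBinom_succ_right]
    ring

theorem antitone_prod_range_one_sub {a : ℕ → ℝ} (h0 : ∀ i, 0 ≤ a i) (h1 : ∀ i, a i ≤ 1) :
    Antitone fun n ↦ ∏ i ∈ range n, (1 - a i) := by
  refine antitone_nat_of_succ_le fun n ↦ ?_
  rw [prod_range_succ]
  exact mul_le_of_le_one_right (prod_nonneg fun i _ ↦ sub_nonneg.2 (h1 i)) (by linarith [h0 n])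

theorem tendsto_prod_range_one_sub_of_not_summable {a : ℕ → ℝ} (h0 : ∀ i, 0 ≤ a i)
    (h1 : ∀ i, a i ≤ 1) (ha : ¬Summable a) :
    Tendsto (fun n ↦ ∏ i ∈ range n, (1 - a i)) atTop (𝓝 0) := by
  have hbound : ∀ n, ∏ i ∈ range n, (1 - a i) ≤ Real.exp (-∑ i ∈ range n, a i) := fun n ↦ by
    rw [← sum_neg_distrib, Real.exp_sum]
    refine prod_le_prod (fun i _ ↦ sub_nonneg.2 (h1 i)) fun i _ ↦ ?_
    linarith [Real.add_one_le_exp (-a i)]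
  have hexp : Tendsto (fun n ↦ Real.exp (-∑ i ∈ range n, a i)) atTop (𝓝 0) :=
    Real.tendsto_exp_atBot.comp <| tendsto_neg_atTop_atBot.comp <|
      (not_summable_iff_tendsto_nat_atTop_of_nonneg h0).1 ha
  exact tendsto_of_tendsto_of_tendsto_of_le_of_le tendsto_const_nhds hexp
    (fun n ↦ prod_nonneg fun i _ ↦ sub_nonneg.2 (h1 i)) hbound

theorem hasSum_sub_succ_of_antitone {P : ℕ → ℝ} {l : ℝ} (hP : Antitone P)
    (hl : Tendsto P atTop (𝓝 l)) : HasSum (fun j ↦ P j - P (j + 1)) (P 0 - l) := by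
  rw [hasSum_iff_tendsto_nat_of_nonneg (fun j ↦ sub_nonneg.2 (hP j.le_succ))]
  simpa only [sum_range_sub'] using tendsto_const_nhds.sub hl

theorem not_summable_div_nat_succ {q : ℝ} (hq : q ≠ 0) : ¬Summable fun i : ℕ ↦ q / (i + 1) := by
  simp only [div_eq_mul_one_div q, summable_mul_left_iff hq]
  exact_mod_cast mt (summable_nat_add_iff 1).1 Real.not_summable_one_div_natCast

/-- for q ∈ (0,1), ∑_{j=0}^{∞} (−1)ʲ binom(q,j) = 0. -/
theorem glc_sum_eq_zero (q : ℝ) (hq0 : 0 < q) (hq1 : q < 1) :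
    HasSum (fun j : ℕ => (-1) ^ j * genBinom q j) 0 := by
  set P : ℕ → ℝ := fun n ↦ ∏ i ∈ range n, (1 - q / (i + 1)) with hP
  have h0 : ∀ i : ℕ, 0 ≤ q / (i + 1) := fun i ↦ by positivity
  have h1 : ∀ i : ℕ, q / (i + 1) ≤ 1 := fun i ↦
    (div_le_one (by positivity)).2 (by linarith [(i.cast_nonneg : (0 : ℝ) ≤ i)])
  have hpartial : ∀ n, ∑ j ∈ range (n + 1), (-1) ^ j * genBinom q j = P n := fun n ↦ by
    rw [← sub_add_cancel q 1, sum_range_succ_neg_one_pow_mul_genBinom, neg_one_pow_mul_genBinom]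
    refine prod_congr rfl fun i _ ↦ ?_
    field_simp
    ring
  have hterm : ∀ j, (-1) ^ (j + 1) * genBinom q (j + 1) = -(P j - P (j + 1)) := fun j ↦ by
    rw [← hpartial, ← hpartial, sum_range_succ _ (j + 1)]
    ring
  have hsum := (hasSum_sub_succ_of_antitone (antitone_prod_range_one_sub h0 h1)
    (tendsto_prod_range_one_sub_of_not_summable h0 h1 (not_summable_div_nat_succ hq0.ne'))).neg
  rw [← hasSum_nat_add_iff' 1]
  simpa [hterm, hP, genBinom_zero_right] using hsum
end

section
/- Fix q ∈ (0,1) and n ≥ 0. The Adams–Moulton corrector weights defined by ρ₀ = n^{q+1} − (n−q)(n+1)^q, ρ_j = (n−j+2)^{q+1} + (n−j)^{q+1} − 2(n−j+1)^{q+1} for 1 ≤ j ≤ n, and ρ_{n+1} = 1, are all nonnegative. -/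
open Real

/-! For `ρ₀`, Bernoulli's inequality `(1 + 1/x)^q ≤ 1 + q/x` turns `(x - q)(x + 1)^q` into
`x^q (x - q)(1 + q/x) = x^q (x - q²/x) ≤ x^{q+1}`. Each `ρⱼ` with `1 ≤ j ≤ n` is a second
difference of the convex function `t ↦ t^{q+1}` on `[0, ∞)`, taken at `n - j ≥ 0`. -/

lemma sub_mul_add_one_rpow_le_rpow_add_one {q x : ℝ} (hq0 : 0 ≤ q) (hq1 : q ≤ 1) (hx : 0 ≤ x) :
    (x - q) * (x + 1) ^ q ≤ x ^ (q + 1) := by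
  rcases le_or_gt x q with hxq | hqx
  · exact (mul_nonpos_of_nonpos_of_nonneg (sub_nonpos.2 hxq) (by positivity)).trans
      (by positivity)
  have hx0 : 0 < x := hq0.trans_lt hqx
  have hbernoulli : (1 + 1 / x) ^ q ≤ 1 + q * (1 / x) :=
    rpow_one_add_le_one_add_mul_self (by linarith [one_div_pos.2 hx0]) hq0 hq1
  have hsplit : (x + 1) ^ q = x ^ q * (1 + 1 / x) ^ q := by
    rw [← mul_rpow hx (by positivity), mul_add, mul_one_div_cancel hx0.ne', mul_one]
  have hfactor : (x - q) * (1 + q * (1 / x)) ≤ x := by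
    have : (x - q) * (1 + q * (1 / x)) = x - q ^ 2 / x := by field_simp; ring
    rw [this]
    linarith [div_nonneg (sq_nonneg q) hx]
  calc (x - q) * (x + 1) ^ q = x ^ q * ((x - q) * (1 + 1 / x) ^ q) := by rw [hsplit]; ring
    _ ≤ x ^ q * ((x - q) * (1 + q * (1 / x))) := by gcongr
    _ ≤ x ^ q * x := by gcongr
    _ = x ^ (q + 1) := by rw [rpow_add_one hx0.ne']

lemma two_mul_add_one_rpow_le {p a : ℝ} (hp : 1 ≤ p) (ha : 0 ≤ a) :
    2 * (a + 1) ^ p ≤ (a + 2) ^ p + a ^ p := by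
  have hmid := (convexOn_rpow hp).2 (Set.mem_Ici.2 ha) (Set.mem_Ici.2 (by linarith : 0 ≤ a + 2))
    (by norm_num : (0 : ℝ) ≤ 1 / 2) (by norm_num : (0 : ℝ) ≤ 1 / 2) (by norm_num)
  simp only [smul_eq_mul] at hmid
  rw [show 1 / 2 * a + 1 / 2 * (a + 2) = a + 1 by ring] at hmid
  linarith

/-- the Adams–Moulton corrector weights
ρ₀ = n^{q+1} − (n−q)(n+1)^q, ρⱼ = (n−j+2)^{q+1} + (n−j)^{q+1} − 2(n−j+1)^{q+1} (1 ≤ j ≤ n),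
ρ_{n+1} = 1, are all nonnegative. -/
theorem corrector_weights_nonneg (q : ℝ) (hq0 : 0 < q) (hq1 : q < 1) (n : ℕ) :
    0 ≤ (n : ℝ) ^ (q + 1) - ((n : ℝ) - q) * ((n : ℝ) + 1) ^ q ∧
    (∀ j : ℕ, 1 ≤ j → j ≤ n →
      0 ≤ ((n : ℝ) - j + 2) ^ (q + 1) + ((n : ℝ) - j) ^ (q + 1)
          - 2 * ((n : ℝ) - j + 1) ^ (q + 1)) ∧
    (0 : ℝ) ≤ 1 := by
  refine ⟨sub_nonneg.2 (sub_mul_add_one_rpow_le_rpow_add_one hq0.le hq1.le n.cast_nonneg),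
    fun j _ hjn => ?_, zero_le_one⟩
  have hj : (0 : ℝ) ≤ n - j := sub_nonneg.2 (Nat.cast_le.2 hjn)
  linarith [two_mul_add_one_rpow_le (by linarith : 1 ≤ q + 1) hj]
end

section
/- For fixed q ∈ (0,1) and x a polynomial, the Grünwald–Letnikov approximation h^{−q} ∑_{j=0}^{⌊t/h⌋} (−1)ʲ binom(q,j) x(t − jh) converges, as h → 0⁺, to the Riemann–Liouville fractional derivative D^q x(t), for each t > 0; in particular for x(τ) = τ it converges to t^{1−q}/Γ(2−q). -/
/-!
Summing the Grünwald–Letnikov weights in closed form (an induction on the upper limit) gives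
`∑_{j ≤ N} (-1)ʲ binom(q,j) (t - jh) = a_N (t + q N h / (1 - q))` with
`a_N = ∏_{i<N} (1 - q + i) / N!`. Euler's limit formula for `Γ(1 - q)` says `a_N ~ N^{-q} / Γ(1 - q)`,
so with `N = ⌊t/h⌋` and `N h → t` the approximation tends to
`t^{-q} (t + q t / (1 - q)) / Γ(1 - q) = t^{1-q} / Γ(2 - q)`.
-/

open Real Filter

open Finset Topology
open scoped Nat

theorem neg_one_pow_mul_prod_range_sub {R : Type*} [CommRing R] (q : R) (n : ℕ) :
    (-1) ^ (n + 1) * ∏ i ∈ range (n + 1), (q - i) = -q * ∏ i ∈ range n, (1 - q + i) := by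
  have hneg := prod_neg (s := range (n + 1)) fun i => q - (i : R)
  rw [card_range] at hneg
  rw [← hneg, prod_range_succ', mul_comm]
  simp only [Nat.cast_succ, Nat.cast_zero, sub_zero]
  congr 1
  exact prod_congr rfl fun i _ => by ring

theorem sum_range_neg_one_pow_mul_genBinom_mul_sub {q : ℝ} (hq : q ≠ 1) (t h : ℝ) (n : ℕ) :
    ∑ j ∈ range (n + 1), (-1) ^ j * genBinom q j * (t - j * h)
      = (∏ i ∈ range n, (1 - q + i)) / n ! * (t + h * q * n / (1 - q)) := by
  have hq' : 1 - q ≠ 0 := sub_ne_zero.2 hq.symm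
  induction n with
  | zero => simp [genBinom]
  | succ n ih =>
    have hterm : (-1) ^ (n + 1) * genBinom q (n + 1)
        = -q * (∏ i ∈ range n, (1 - q + i)) / (n + 1)! := by
      rw [genBinom, ← neg_one_pow_mul_prod_range_sub]; ring
    rw [sum_range_succ, ih, hterm, prod_range_succ, Nat.factorial_succ]
    push_cast
    field_simp
    ring

theorem prod_range_add_div_factorial_mul_rpow_eq {s : ℝ} (hs : 0 < s) {n : ℕ} (hn : n ≠ 0) :
    (∏ i ∈ range n, (s + i)) / n ! * (n : ℝ) ^ (1 - s) = n / (s + n) / GammaSeq s n := by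
  have hn' : (0 : ℝ) < n := by positivity
  have hprod : 0 < ∏ i ∈ range n, (s + i) := prod_pos fun i _ => by positivity
  rw [GammaSeq, prod_range_succ, rpow_sub hn', rpow_one]
  field_simp

theorem tendsto_prod_range_add_div_factorial_mul_rpow {s : ℝ} (hs : 0 < s) :
    Tendsto (fun n : ℕ => (∏ i ∈ range n, (s + i)) / n ! * (n : ℝ) ^ (1 - s)) atTop
      (𝓝 (Gamma s)⁻¹) := by
  have hlim := (tendsto_natCast_div_add_atTop s).div (GammaSeq_tendsto_Gamma s)
    (Gamma_pos_of_pos hs).ne'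
  rw [one_div] at hlim
  refine hlim.congr' ?_
  filter_upwards [eventually_ne_atTop 0] with n hn
  rw [prod_range_add_div_factorial_mul_rpow_eq hs hn, add_comm s, Pi.div_apply]

theorem tendsto_mul_natFloor_div_nhdsGT_zero {t : ℝ} (ht : 0 ≤ t) :
    Tendsto (fun h : ℝ => h * ⌊t / h⌋₊) (𝓝[>] 0) (𝓝 t) := by
  refine ((tendsto_nat_floor_mul_div_atTop ht).comp tendsto_inv_nhdsGT_zero).congr fun h => ?_
  simp [div_eq_mul_inv, mul_comm]

theorem tendsto_natFloor_div_nhdsGT_zero {t : ℝ} (ht : 0 < t) :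
    Tendsto (fun h : ℝ => ⌊t / h⌋₊) (𝓝[>] 0) atTop :=
  tendsto_nat_floor_atTop.comp (tendsto_inv_nhdsGT_zero.const_mul_atTop ht)

theorem gl_approx_tendsto_rl_general (q t : ℝ) (hq1 : q < 1) (ht : 0 < t) :
    Tendsto
      (fun h : ℝ => h ^ (-q) *
        ∑ j ∈ Finset.range (⌊t / h⌋₊ + 1), (-1) ^ j * genBinom q j * (t - j * h))
      (nhdsWithin 0 (Set.Ioi 0))
      (nhds (t ^ (1 - q) / Real.Gamma (2 - q))) := by
  have hs : 0 < 1 - q := sub_pos.2 hq1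
  have hN := tendsto_natFloor_div_nhdsGT_zero ht
  have hhN := tendsto_mul_natFloor_div_nhdsGT_zero ht.le
  have hlim := ((tendsto_prod_range_add_div_factorial_mul_rpow hs).comp hN).mul
    ((hhN.rpow_const (p := -q) (.inl ht.ne')).mul
      ((tendsto_const_nhds (x := t)).add (hhN.mul_const (q / (1 - q)))))
  have hval : (Gamma (1 - q))⁻¹ * (t ^ (-q) * (t + t * (q / (1 - q))))
      = t ^ (1 - q) / Gamma (2 - q) := by
    have hpow : t ^ (1 - q) = t ^ (-q) * t := by rw [← rpow_add_one ht.ne', neg_add_eq_sub]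
    rw [show 2 - q = 1 - q + 1 by ring, Gamma_add_one hs.ne', hpow]
    have := (Gamma_pos_of_pos hs).ne'
    field_simp
    ring
  rw [← hval]
  refine hlim.congr' ?_
  filter_upwards [self_mem_nhdsWithin, hN.eventually_ne_atTop 0] with h (hh : 0 < h) hn
  have hn' : (0 : ℝ) < ⌊t / h⌋₊ := by positivity
  -- the factor `N ^ q` is absorbed by `a_N`, leaving `(N h) ^ (-q)` with `N = ⌊t / h⌋₊`
  have hsplit : h ^ (-q) = (⌊t / h⌋₊ : ℝ) ^ q * (h * ⌊t / h⌋₊) ^ (-q) := by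
    rw [mul_rpow hh.le hn'.le, rpow_neg hn'.le, mul_left_comm, mul_inv_cancel₀ (by positivity),
      mul_one]
  simp only [Function.comp_apply, sum_range_neg_one_pow_mul_genBinom_mul_sub hq1.ne, hsplit,
    sub_sub_cancel]
  field_simp

/-- special case x(τ) = τ: the Grünwald–Letnikov approximation
h^{−q} ∑_{j=0}^{⌊t/h⌋} (−1)ʲ binom(q,j) (t − jh) converges as h → 0⁺ to
t^{1−q}/Γ(2−q), the Riemann–Liouville derivative of τ ↦ τ at t. -/
theorem gl_approx_tendsto_rl (q t : ℝ) (hq0 : 0 < q) (hq1 : q < 1) (ht : 0 < t) :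
    Tendsto
      (fun h : ℝ => h ^ (-q) *
        ∑ j ∈ Finset.range (⌊t / h⌋₊ + 1), (-1) ^ j * genBinom q j * (t - j * h))
      (nhdsWithin 0 (Set.Ioi 0))
      (nhds (t ^ (1 - q) / Real.Gamma (2 - q))) :=
  gl_approx_tendsto_rl_general q t hq1 ht
end
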